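/- For a Gaussian mixture distribution π = Σᵢ wᵢ N(μᵢ, σ²I) on ℝ^d, the negative log-density satisfies -∇² log π ⪰ (1/σ² - max_{i,j} ‖μᵢ - μⱼ‖² / (2σ⁴)) I. -/

import Mathlib

/-!
Writing `aᵢ(z) = wᵢ exp(-‖z - μᵢ‖² / (2σ²))` and `sᵢ = ⟪x - μᵢ, v⟫`, differentiating
`-log Σᵢ aᵢ` twice in the direction `v` gives `‖v‖² / σ² - Var(s) / σ⁴`, where `Var(s)` is the
variance of `s` under the posterior weights `aᵢ(x) / Σⱼ aⱼ(x)`. By Lagrange's identity that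
variance is half the weighted mean of `(sᵢ - sⱼ)²`, and Cauchy–Schwarz bounds
`(sᵢ - sⱼ)² = ⟪μⱼ - μᵢ, v⟫²` by `‖μᵢ - μⱼ‖² ‖v‖²`. The normalising constant
`(2πσ²)^(-d/2)` only rescales the weights.
-/

open Real Finset
open scoped RealInnerProductSpace

section WeightedVariance

variable {ι : Type*} [Fintype ι]

noncomputable def weightedMean (a s : ι → ℝ) : ℝ := (∑ i, a i * s i) / ∑ i, a i

noncomputable def weightedVariance (a s : ι → ℝ) : ℝ :=
  weightedMean a (s ^ 2) - weightedMean a s ^ 2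

theorem sum_sum_mul_mul_sub_sq (a s : ι → ℝ) :
    ∑ i, ∑ j, a i * a j * (s i - s j) ^ 2 =
      2 * ((∑ i, a i * s i ^ 2) * ∑ i, a i - (∑ i, a i * s i) ^ 2) := by
  have expand : ∀ i j, a i * a j * (s i - s j) ^ 2 =
      a i * s i ^ 2 * a j + a i * (a j * s j ^ 2) - 2 * (a i * s i * (a j * s j)) :=
    fun i j => by ring
  simp only [expand, sum_add_distrib, sum_sub_distrib, ← mul_sum, ← sum_mul]
  ring

theorem weightedVariance_le {a s : ι → ℝ} {K : ℝ} (ha : ∀ i, 0 ≤ a i) (hA : 0 < ∑ i, a i)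
    (hK : ∀ i j, (s i - s j) ^ 2 ≤ K) : weightedVariance a s ≤ K / 2 := by
  have hsum : ∑ i, ∑ j, a i * a j * (s i - s j) ^ 2 ≤ (∑ i, a i) ^ 2 * K :=
    calc ∑ i, ∑ j, a i * a j * (s i - s j) ^ 2 ≤ ∑ i, ∑ j, a i * a j * K := by
          gcongr with i _ j _
          · exact mul_nonneg (ha i) (ha j)
          · exact hK i j
      _ = (∑ i, a i) ^ 2 * K := by rw [sq, sum_mul_sum, sum_mul]; simp_rw [sum_mul]
  rw [sum_sum_mul_mul_sub_sq] at hsum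
  rw [weightedVariance, weightedMean, weightedMean, div_pow,
    div_sub_div _ _ hA.ne' (pow_ne_zero 2 hA.ne'), div_le_iff₀ (by positivity)]
  simp only [Pi.pow_apply]
  nlinarith

end WeightedVariance

section GaussianMixture

variable {ι E : Type*} [NormedAddCommGroup E] (w : ι → ℝ) (μ : ι → E) (σ : ℝ)

noncomputable def gaussianComponent (i : ι) (z : E) : ℝ :=
  w i * exp (-‖z - μ i‖ ^ 2 / (2 * σ ^ 2))

noncomputable def gaussianMixture [Fintype ι] (z : E) : ℝ := ∑ i, gaussianComponent w μ σ i z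

variable {w}

theorem gaussianComponent_pos {i : ι} (hw : 0 < w i) (z : E) : 0 < gaussianComponent w μ σ i z :=
  mul_pos hw (exp_pos _)

theorem gaussianMixture_pos [Fintype ι] [Nonempty ι] (hw : ∀ i, 0 < w i) (z : E) :
    0 < gaussianMixture w μ σ z :=
  sum_pos (fun i _ => gaussianComponent_pos μ σ (hw i) z) univ_nonempty

variable [InnerProductSpace ℝ E] (w)

theorem hasFDerivAt_gaussianComponent (i : ι) (z : E) :
    HasFDerivAt (gaussianComponent w μ σ i)
      ((-gaussianComponent w μ σ i z / σ ^ 2) • innerSL ℝ (z - μ i)) z := by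
  have h := ((((hasFDerivAt_id z).sub_const (μ i)).norm_sq.fun_neg.mul_const
    (2 * σ ^ 2)⁻¹).exp).const_mul (w i)
  simp only [id, ← div_eq_mul_inv] at h
  refine h.congr_fderiv ?_
  ext u
  simp only [gaussianComponent, smul_apply, neg_apply, ContinuousLinearMap.comp_id, nsmul_eq_mul,
    innerSL_apply_apply, smul_eq_mul]
  ring

variable [Fintype ι]

theorem hasFDerivAt_gaussianMixture (z : E) :
    HasFDerivAt (gaussianMixture w μ σ)
      (∑ i, (-gaussianComponent w μ σ i z / σ ^ 2) • innerSL ℝ (z - μ i)) z :=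
  HasFDerivAt.fun_sum fun i _ => hasFDerivAt_gaussianComponent w μ σ i z

variable {w} [Nonempty ι]

theorem fderiv_neg_log_gaussianMixture_apply (hw : ∀ i, 0 < w i) (y v : E) :
    fderiv ℝ (fun z => -log (gaussianMixture w μ σ z)) y v =
      weightedMean (gaussianComponent w μ σ · y) (fun i => ⟪y - μ i, v⟫) / σ ^ 2 := by
  rw [((hasFDerivAt_gaussianMixture w μ σ y).log
    (gaussianMixture_pos μ σ hw y).ne').fun_neg.fderiv]
  simp only [neg_apply, smul_apply, _root_.sum_apply, innerSL_apply_apply, smul_eq_mul,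
    weightedMean, gaussianMixture, neg_div, neg_mul, sum_neg_distrib, div_mul_eq_mul_div, ← sum_div]
  ring

theorem fderiv_fderiv_neg_log_gaussianMixture_apply (hw : ∀ i, 0 < w i) (hσ : σ ≠ 0) (x v : E) :
    fderiv ℝ (fun y => fderiv ℝ (fun z => -log (gaussianMixture w μ σ z)) y v) x v =
      ‖v‖ ^ 2 / σ ^ 2 -
        weightedVariance (gaussianComponent w μ σ · x) (fun i => ⟪x - μ i, v⟫) / σ ^ 4 := by
  have hNum : HasFDerivAt (fun y => ∑ i, gaussianComponent w μ σ i y * ⟪y - μ i, v⟫) _ x :=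
    HasFDerivAt.fun_sum fun i _ => (hasFDerivAt_gaussianComponent w μ σ i x).mul
      (((hasFDerivAt_id x).sub_const (μ i)).inner ℝ (hasFDerivAt_const v x))
  have hGx := (gaussianMixture_pos μ σ hw x).ne'
  have h : HasFDerivAt (fun y => (∑ i, gaussianComponent w μ σ i y * ⟪y - μ i, v⟫) *
      (gaussianMixture w μ σ y)⁻¹ * (σ ^ 2)⁻¹) _ x :=
    (hNum.mul ((hasDerivAt_inv hGx).comp_hasFDerivAt x
      (hasFDerivAt_gaussianMixture w μ σ x))).mul_const (σ ^ 2)⁻¹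
  have hfun : (fun y => fderiv ℝ (fun z => -log (gaussianMixture w μ σ z)) y v) =
      fun y => (∑ i, gaussianComponent w μ σ i y * ⟪y - μ i, v⟫) *
        (gaussianMixture w μ σ y)⁻¹ * (σ ^ 2)⁻¹ := by
    funext y
    rw [fderiv_neg_log_gaussianMixture_apply μ σ hw, weightedMean, div_eq_mul_inv, div_eq_mul_inv]
    rfl
  rw [hfun, h.fderiv]
  simp only [add_apply, smul_apply, _root_.sum_apply, ContinuousLinearMap.comp_apply,
    ContinuousLinearMap.prod_apply, ContinuousLinearMap.id_apply, zero_apply, id,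
    fderivInnerCLM_apply, innerSL_apply_apply, inner_zero_right, real_inner_self_eq_norm_sq,
    smul_eq_mul, zero_add, Function.comp_apply, weightedVariance, weightedMean, Pi.pow_apply]
  -- Opaque names for the weights and projections, so that the sums become atoms for `ring`.
  obtain ⟨a, ha⟩ : ∃ a : ι → ℝ, ∀ i, gaussianComponent w μ σ i x = a i := ⟨_, fun _ => rfl⟩
  obtain ⟨s, hs⟩ : ∃ s : ι → ℝ, ∀ i, ⟪x - μ i, v⟫ = s i := ⟨_, fun _ => rfl⟩
  have hG : gaussianMixture w μ σ x = ∑ i, a i := sum_congr rfl fun i _ => ha i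
  rw [hG] at hGx
  simp only [ha, hs]
  have hdG : ∑ i, -a i / σ ^ 2 * s i = -(∑ i, a i * s i) / σ ^ 2 := by
    simp only [neg_div, neg_mul, sum_neg_distrib, div_mul_eq_mul_div, ← sum_div]
  have hdNum : ∑ i, (a i * ‖v‖ ^ 2 + s i * (-a i / σ ^ 2 * s i)) =
      (∑ i, a i) * ‖v‖ ^ 2 - (∑ i, a i * s i ^ 2) / σ ^ 2 := by
    rw [sum_add_distrib, ← sum_mul, sub_eq_add_neg, sum_div, ← sum_neg_distrib]
    exact congrArg _ (sum_congr rfl fun i _ => by ring)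
  rw [hG, hdG, hdNum]
  field_simp
  ring

end GaussianMixture

theorem stmt_5_general (d N : ℕ) (hN : 0 < N) (σ D : ℝ) (hσ : 0 < σ)
    (w : Fin N → ℝ) (hw : ∀ i, 0 < w i)
    (μ : Fin N → EuclideanSpace ℝ (Fin d))
    (hD : ∀ i j, ‖μ i - μ j‖ ^ 2 ≤ D) :
    ∀ x v : EuclideanSpace ℝ (Fin d),
      (1 / σ ^ 2 - D / (2 * σ ^ 4)) * ‖v‖ ^ 2 ≤
      (fderiv ℝ (fun y => fderiv ℝ
        (fun z => -Real.log (∑ i, w i *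
          ((2 * Real.pi * σ ^ 2) ^ (-(d : ℝ) / 2) *
            Real.exp (-‖z - μ i‖ ^ 2 / (2 * σ ^ 2))))) y v) x) v := by
  intro x v
  have : Nonempty (Fin N) := ⟨⟨0, hN⟩⟩
  set c := (2 * π * σ ^ 2) ^ (-(d : ℝ) / 2)
  have hwc : ∀ i, 0 < w i * c := fun i => mul_pos (hw i) (by positivity)
  have hmixture : (fun z => -log (∑ i, w i * (c * exp (-‖z - μ i‖ ^ 2 / (2 * σ ^ 2))))) =
      fun z => -log (gaussianMixture (fun i => w i * c) μ σ z) := by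
    simp only [gaussianMixture, gaussianComponent, mul_assoc]
  have hspread : ∀ i j, (⟪x - μ i, v⟫ - ⟪x - μ j, v⟫) ^ 2 ≤ D * ‖v‖ ^ 2 := fun i j =>
    calc (⟪x - μ i, v⟫ - ⟪x - μ j, v⟫) ^ 2 = ⟪μ j - μ i, v⟫ ^ 2 := by
          rw [← inner_sub_left, sub_sub_sub_cancel_left]
      _ ≤ (‖μ j - μ i‖ * ‖v‖) ^ 2 :=
          sq_le_sq.mpr ((abs_real_inner_le_norm _ _).trans (le_abs_self _))
      _ ≤ D * ‖v‖ ^ 2 := by rw [mul_pow]; gcongr; exact hD j i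
  have hvar := weightedVariance_le (fun i => (gaussianComponent_pos μ σ (hwc i) x).le)
    (gaussianMixture_pos μ σ hwc x) hspread
  rw [hmixture, fderiv_fderiv_neg_log_gaussianMixture_apply μ σ hwc hσ.ne']
  calc (1 / σ ^ 2 - D / (2 * σ ^ 4)) * ‖v‖ ^ 2 = ‖v‖ ^ 2 / σ ^ 2 - D * ‖v‖ ^ 2 / 2 / σ ^ 4 := by
        ring
    _ ≤ _ := by gcongr

/-- For a Gaussian mixture `π = Σᵢ wᵢ N(μᵢ, σ²I)` on `ℝ^d`, if `D` bounds all
squared pairwise distances of the means (in particular for `D = max_{i,j}‖μᵢ-μⱼ‖²`),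
then `-∇² log π ⪰ (1/σ² - D/(2σ⁴)) I`. -/
theorem stmt_5 (d N : ℕ) (hN : 0 < N) (σ D : ℝ) (hσ : 0 < σ)
    (w : Fin N → ℝ) (hw : ∀ i, 0 < w i) (hsum : ∑ i, w i = 1)
    (μ : Fin N → EuclideanSpace ℝ (Fin d))
    (hD : ∀ i j, ‖μ i - μ j‖ ^ 2 ≤ D) :
    ∀ x v : EuclideanSpace ℝ (Fin d),
      (1 / σ ^ 2 - D / (2 * σ ^ 4)) * ‖v‖ ^ 2 ≤
      (fderiv ℝ (fun y => fderiv ℝ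
        (fun z => -Real.log (∑ i, w i *
          ((2 * Real.pi * σ ^ 2) ^ (-(d : ℝ) / 2) *
            Real.exp (-‖z - μ i‖ ^ 2 / (2 * σ ^ 2))))) y v) x) v :=
  stmt_5_general d N hN σ D hσ w hw μ hD
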